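/- arXiv:nlin/0009006 — 7 statements merged into one kernel-verified Lean document; each statement's English description precedes it below -/
import Mathlib

section
/- Let N ≥ 0 and let f : Fin N → (Fin (N+2) → ℂ) and a₀, a₁, a₂, a₃ : Fin (N+2) → ℂ be given. Writing [f, u, v] for the determinant of the (N+2)×(N+2) matrix whose first N columns are f₁, …, f_N followed by the columns u and v, one has the Plücker-type relation [f, a₀, a₁]·[f, a₂, a₃] − [f, a₀, a₂]·[f, a₁, a₃] + [f, a₀, a₃]·[f, a₁, a₂] = 0. -/
set_option maxHeartbeats 1000000

private def pMat (N : ℕ) (f : Fin N → (Fin (N + 2) → ℂ)) (u v : Fin (N + 2) → ℂ) :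
    Matrix (Fin (N + 2)) (Fin (N + 2)) ℂ :=
  Matrix.of fun r c =>
    if h : (c : ℕ) < N then f ⟨c, h⟩ r else if (c : ℕ) = N then u r else v r

private lemma pMat_apply (N : ℕ) (f : Fin N → (Fin (N + 2) → ℂ)) (u v : Fin (N + 2) → ℂ)
    (r c : Fin (N + 2)) :
    pMat N f u v r c
      = if h : (c : ℕ) < N then f ⟨c, h⟩ r else if (c : ℕ) = N then u r else v r := rfl

/-- value of succAbove -/
private lemma succAbove_val {n : ℕ} (k : Fin (n + 1)) (j : Fin n) :
    ((k.succAbove j : Fin (n + 1)) : ℕ) = if (j : ℕ) < (k : ℕ) then (j : ℕ) else (j : ℕ) + 1 := by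
  rcases lt_or_ge (j : ℕ) (k : ℕ) with h | h
  · rw [Fin.succAbove_of_castSucc_lt _ _ (by simpa [Fin.lt_def] using h)]
    simp [h]
  · rw [Fin.succAbove_of_le_castSucc _ _ (by simpa [Fin.le_def] using h)]
    simp [Nat.not_lt.mpr h]


/-- Plücker-type relation: writing `[f, u, v]` for the determinant of the
`(N+2)×(N+2)` complex matrix whose first `N` columns are `f₁, …, f_N` followed by
the columns `u` and `v`, one has
`[f,a₀,a₁]·[f,a₂,a₃] − [f,a₀,a₂]·[f,a₁,a₃] + [f,a₀,a₃]·[f,a₁,a₂] = 0`. -/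
theorem plucker_type_relation (N : ℕ) (f : Fin N → (Fin (N + 2) → ℂ))
    (a₀ a₁ a₂ a₃ : Fin (N + 2) → ℂ)
    (D : (Fin (N + 2) → ℂ) → (Fin (N + 2) → ℂ) → ℂ)
    (hD : ∀ u v : Fin (N + 2) → ℂ,
      D u v = Matrix.det (Matrix.of fun (r c : Fin (N + 2)) =>
        if h : (c : ℕ) < N then f ⟨c, h⟩ r
        else if (c : ℕ) = N then u r else v r)) :
    D a₀ a₁ * D a₂ a₃ - D a₀ a₂ * D a₁ a₃ + D a₀ a₃ * D a₁ a₂ = 0 := by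
  classical
  have hD' : ∀ u v, D u v = (pMat N f u v).det := hD
  -- Step A : D a₀ (f i) = 0
  have hzero : ∀ i : Fin N, D a₀ (f i) = 0 := by
    intro i
    rw [hD']
    refine Matrix.det_zero_of_column_eq (i := ⟨(i : ℕ), by omega⟩) (j := ⟨N + 1, by omega⟩)
      ?_ ?_
    · intro h
      have := congrArg Fin.val h
      simp at this; omega
    · intro k
      rw [pMat_apply, pMat_apply]
      rw [dif_pos (show ((⟨(i : ℕ), by omega⟩ : Fin (N + 2)) : ℕ) < N from i.isLt)]
      rw [dif_neg (by simp), if_neg (by simp)]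
  -- Step B : linearity of D a₀ ·
  have hupd : ∀ v, pMat N f a₀ v
      = (pMat N f a₀ 0).updateCol ⟨N + 1, by omega⟩ v := by
    intro v
    ext r c
    by_cases hc : c = ⟨N + 1, by omega⟩
    · subst hc
      rw [Matrix.updateCol_self, pMat_apply]
      rw [dif_neg (by simp), if_neg (by simp)]
    · rw [Matrix.updateCol_ne hc, pMat_apply, pMat_apply]
      have hcv : (c : ℕ) ≠ N + 1 := fun h => hc (Fin.ext h)
      have : (c : ℕ) < N ∨ (c : ℕ) = N := by omega
      rcases this with h | h
      · rw [dif_pos h, dif_pos h]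
      · rw [dif_neg (by omega), dif_neg (by omega), if_pos h, if_pos h]
  set L : (Fin (N + 2) → ℂ) →ₗ[ℂ] ℂ :=
    (LinearMap.proj (⟨N + 1, by omega⟩ : Fin (N + 2))).comp
      (Matrix.cramer (pMat N f a₀ 0)) with hLdef
  have hL : ∀ v, D a₀ v = L v := by
    intro v
    rw [hD', hupd v, hLdef]
    simp [Matrix.cramer_apply]
  set coef : Fin (N + 2) → ℂ := fun s => L fun j => if s = j then 1 else 0 with hcoef
  have hlin : ∀ v, D a₀ v = ∑ s, v s * coef s := by
    intro v
    rw [hL, LinearMap.pi_apply_eq_sum_univ L v]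
    simp [hcoef, smul_eq_mul]
  -- Step C : the big matrix
  set y : Fin (N + 3) → Fin (N + 2) → ℂ := fun k =>
    if h : (k : ℕ) < N then f ⟨(k : ℕ), h⟩
    else if (k : ℕ) = N then a₁ else if (k : ℕ) = N + 1 then a₂ else a₃ with hy
  have hyf : ∀ (k : Fin (N + 3)) (h : (k : ℕ) < N), y k = f ⟨(k : ℕ), h⟩ := by
    intro k h; simp only [hy]; rw [dif_pos h]
  have hy1 : ∀ (k : Fin (N + 3)), (k : ℕ) = N → y k = a₁ := by
    intro k h; simp only [hy]; rw [dif_neg (by omega), if_pos h]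
  have hy2 : ∀ (k : Fin (N + 3)), (k : ℕ) = N + 1 → y k = a₂ := by
    intro k h; simp only [hy]; rw [dif_neg (by omega), if_neg (by omega), if_pos h]
  have hy3 : ∀ (k : Fin (N + 3)), (k : ℕ) = N + 2 → y k = a₃ := by
    intro k h; simp only [hy]
    rw [dif_neg (by omega), if_neg (by omega), if_neg (by omega)]
  set B₀ : Matrix (Fin (N + 3)) (Fin (N + 3)) ℂ :=
    Matrix.of fun r k => if h : (r : ℕ) < N + 2 then y k ⟨(r : ℕ), h⟩ else 0 with hB₀
  have hB₀app : ∀ (r : Fin (N + 2)) (k : Fin (N + 3)),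
      B₀ (Fin.castSucc r) k = y k r := by
    intro r k
    show (if h : ((Fin.castSucc r : Fin (N + 3)) : ℕ) < N + 2 then y k ⟨_, h⟩ else 0) = y k r
    rw [dif_pos (by simpa using r.isLt)]
    exact congrArg (y k) (Fin.ext (by simp))
  set lr : Fin (N + 3) := Fin.last (N + 2) with hlr
  set c' : Fin (N + 3) → ℂ := fun k =>
    if h : (k : ℕ) < N + 2 then coef ⟨(k : ℕ), h⟩ else 0 with hc'
  set B : Matrix (Fin (N + 3)) (Fin (N + 3)) ℂ := B₀.updateRow lr (∑ k, c' k • B₀ k) with hB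
  clear_value L coef y B₀ lr c' B
  have hdetB : B.det = 0 := by
    rw [hB, Matrix.det_updateRow_sum]
    have : c' lr = 0 := by simp only [hc']; rw [dif_neg (by simp [hlr])]
    rw [this, zero_smul]
  -- last row of B
  have hBlast : ∀ k, B lr k = D a₀ (y k) := by
    intro k
    rw [hlin]
    have h0 : B lr k = ∑ j, c' j * B₀ j k := by
      rw [hB, Matrix.updateRow_self, Finset.sum_apply]
      simp [Pi.smul_apply]
    rw [h0, Fin.sum_univ_castSucc]
    have hz : c' (Fin.last (N + 2)) = 0 := by
      simp only [hc']; rw [dif_neg (by simp)]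
    rw [hz, zero_mul, add_zero]
    refine Finset.sum_congr rfl fun s _ => ?_
    have h1 : c' (Fin.castSucc s) = coef s := by
      simp only [hc']
      rw [dif_pos (by simpa using s.isLt)]
      exact congrArg coef (Fin.ext (by simp))
    rw [h1, hB₀app, mul_comm]
  -- other rows of B
  have hBrow : ∀ (r : Fin (N + 2)) (k : Fin (N + 3)), B (lr.succAbove r) k = y k r := by
    intro r k
    have hne : lr.succAbove r ≠ lr := Fin.succAbove_ne _ _
    rw [hB, Matrix.updateRow_ne hne, hlr, Fin.succAbove_last, hB₀app]
  -- minors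
  have hminor : ∀ (k : Fin (N + 3)) (u v : Fin (N + 2) → ℂ),
      (∀ (j : Fin (N + 2)) (r : Fin (N + 2)), y (k.succAbove j) r = pMat N f u v r j) →
      (B.submatrix lr.succAbove k.succAbove).det = D u v := by
    intro k u v h
    rw [hD']
    congr 1
    ext r j
    rw [Matrix.submatrix_apply, hBrow]
    exact h j r
  -- the three column identities
  have hcol : ∀ (k : Fin (N + 3)) (u v : Fin (N + 2) → ℂ),
      N ≤ (k : ℕ) →
      ((k : ℕ) = N → u = a₂ ∧ v = a₃) → ((k : ℕ) = N + 1 → u = a₁ ∧ v = a₃) →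
      ((k : ℕ) = N + 2 → u = a₁ ∧ v = a₂) →
      ∀ (j : Fin (N + 2)) (r : Fin (N + 2)),
        y (k.succAbove j) r = pMat N f u v r j := by
    intro k u v hNk h0 h1 h2 j r
    have hval : ((k.succAbove j : Fin (N + 3)) : ℕ)
        = if (j : ℕ) < (k : ℕ) then (j : ℕ) else (j : ℕ) + 1 := succAbove_val _ _
    have hk3 : (k : ℕ) < N + 3 := k.isLt
    rw [pMat_apply]
    by_cases hj : (j : ℕ) < N
    · have hidx : ((k.succAbove j : Fin (N + 3)) : ℕ) = (j : ℕ) := by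
        rw [hval, if_pos (by omega)]
      rw [hyf _ (by omega), dif_pos hj]
      exact congrFun (congrArg f (Fin.ext hidx)) r
    · rw [dif_neg hj]
      have hj2 : (j : ℕ) = N ∨ (j : ℕ) = N + 1 := by omega
      have hkv : (k : ℕ) = N ∨ (k : ℕ) = N + 1 ∨ (k : ℕ) = N + 2 := by omega
      rcases hkv with hkv | hkv | hkv
      · obtain ⟨rfl, rfl⟩ := h0 hkv
        rcases hj2 with hj2 | hj2
        · rw [if_pos hj2, hy2 _ (by rw [hval, if_neg (by omega)]; omega)]
        · rw [if_neg (by omega), hy3 _ (by rw [hval, if_neg (by omega)]; omega)]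
      · obtain ⟨rfl, rfl⟩ := h1 hkv
        rcases hj2 with hj2 | hj2
        · rw [if_pos hj2, hy1 _ (by rw [hval, if_pos (by omega)]; omega)]
        · rw [if_neg (by omega), hy3 _ (by rw [hval, if_neg (by omega)]; omega)]
      · obtain ⟨rfl, rfl⟩ := h2 hkv
        rcases hj2 with hj2 | hj2
        · rw [if_pos hj2, hy1 _ (by rw [hval, if_pos (by omega)]; omega)]
        · rw [if_neg (by omega), hy2 _ (by rw [hval, if_pos (by omega)]; omega)]
  -- Laplace expansion
  have hexp := Matrix.det_succ_row (n := N + 2) B lr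
  rw [hdetB] at hexp
  set g : Fin (N + 3) → ℂ := fun k =>
    (-1 : ℂ) ^ ((lr : ℕ) + (k : ℕ)) * B lr k * (B.submatrix lr.succAbove k.succAbove).det
      with hg
  clear_value g
  have hgapp : ∀ k, g k
      = (-1 : ℂ) ^ ((lr : ℕ) + (k : ℕ)) * B lr k * (B.submatrix lr.succAbove k.succAbove).det :=
    fun k => by rw [hg]
  have hexp2 : (0 : ℂ) = ∑ k, g k := hexp
  rw [Fin.sum_univ_castSucc, Fin.sum_univ_castSucc, Fin.sum_univ_castSucc] at hexp2
  have hzsum : ∀ j : Fin N,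
      g (Fin.castSucc (Fin.castSucc (Fin.castSucc j))) = 0 := by
    intro j
    have hvj : ((Fin.castSucc (Fin.castSucc (Fin.castSucc j)) : Fin (N + 3)) : ℕ)
        = (j : ℕ) := by simp
    have hyj : y (Fin.castSucc (Fin.castSucc (Fin.castSucc j))) = f j := by
      rw [hyf _ (by rw [hvj]; exact j.isLt)]
      exact congrArg f (Fin.ext (by simp))
    have hBz : B lr (Fin.castSucc (Fin.castSucc (Fin.castSucc j))) = 0 := by
      rw [hBlast, hyj, hzero]
    rw [hgapp, hBz, mul_zero, zero_mul]
  rw [Finset.sum_eq_zero (fun j _ => hzsum j), zero_add] at hexp2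
  obtain ⟨kN, hkN⟩ : ∃ k : Fin (N + 3), (k : ℕ) = N := ⟨⟨N, by omega⟩, rfl⟩
  obtain ⟨kN1, hkN1⟩ : ∃ k : Fin (N + 3), (k : ℕ) = N + 1 := ⟨⟨N + 1, by omega⟩, rfl⟩
  obtain ⟨kN2, hkN2⟩ : ∃ k : Fin (N + 3), (k : ℕ) = N + 2 := ⟨⟨N + 2, by omega⟩, rfl⟩
  have eN : (Fin.castSucc (Fin.castSucc (Fin.last N)) : Fin (N + 3)) = kN := by
    apply Fin.ext; simp [hkN]
  have eN1 : (Fin.castSucc (Fin.last (N + 1)) : Fin (N + 3)) = kN1 := by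
    apply Fin.ext; simp [hkN1]
  have eN2 : (Fin.last (N + 2) : Fin (N + 3)) = kN2 := by
    apply Fin.ext; simp [hkN2]
  rw [eN, eN1, eN2] at hexp2
  have hlrval : (lr : ℕ) = N + 2 := by rw [hlr]; simp
  have hgN : g kN = D a₀ a₁ * D a₂ a₃ := by
    have h1 : B lr kN = D a₀ a₁ := by rw [hBlast, hy1 _ hkN]
    have h2 := hminor kN a₂ a₃
      (hcol kN a₂ a₃ (by omega) (fun _ => ⟨rfl, rfl⟩)
        (fun h => absurd h (by omega)) (fun h => absurd h (by omega)))
    have hs : (-1 : ℂ) ^ ((lr : ℕ) + (kN : ℕ)) = 1 := by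
      have he : (lr : ℕ) + (kN : ℕ) = 2 * (N + 1) := by omega
      simp only [he, pow_mul]; norm_num
    rw [hgapp]
    simp only [h1, h2, hs, one_mul]
  have hgN1 : g kN1 = -(D a₀ a₂ * D a₁ a₃) := by
    have h1 : B lr kN1 = D a₀ a₂ := by rw [hBlast, hy2 _ hkN1]
    have h2 := hminor kN1 a₁ a₃
      (hcol kN1 a₁ a₃ (by omega) (fun h => absurd h (by omega))
        (fun _ => ⟨rfl, rfl⟩) (fun h => absurd h (by omega)))
    have hs : (-1 : ℂ) ^ ((lr : ℕ) + (kN1 : ℕ)) = -1 := by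
      have he : (lr : ℕ) + (kN1 : ℕ) = 2 * (N + 1) + 1 := by omega
      simp only [he, pow_succ, pow_mul]; norm_num
    rw [hgapp]
    simp only [h1, h2, hs]
    ring
  have hgN2 : g kN2 = D a₀ a₃ * D a₁ a₂ := by
    have h1 : B lr kN2 = D a₀ a₃ := by rw [hBlast, hy3 _ hkN2]
    have h2 := hminor kN2 a₁ a₂
      (hcol kN2 a₁ a₂ (by omega) (fun h => absurd h (by omega))
        (fun h => absurd h (by omega)) (fun _ => ⟨rfl, rfl⟩))
    have hs : (-1 : ℂ) ^ ((lr : ℕ) + (kN2 : ℕ)) = 1 := by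
      have he : (lr : ℕ) + (kN2 : ℕ) = 2 * (N + 2) := by omega
      simp only [he, pow_mul]; norm_num
    rw [hgapp]
    simp only [h1, h2, hs, one_mul]
  rw [hgN, hgN1, hgN2] at hexp2
  linear_combination -1 * hexp2
end

section
/- Let m ≥ 2 and let M be an m×m matrix over a commutative ring. Denote by M(i|j) the determinant of the matrix obtained from M by deleting row i and column j, and by M(1,m|1,m) the determinant of the matrix obtained by deleting rows 1 and m and columns 1 and m (interpreted as 1 when m = 2). Then M(m|m)·M(1|1) = M(1|m)·M(m|1) + det(M)·M(1,m|1,m). -/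
open Matrix

namespace DesnanotJacobiAux

variable {R : Type*} [CommRing R]

/-- Laplace expansion along the first column when it has a single possibly-nonzero entry. -/
private lemma det_col_zero {k : ℕ} (A : Matrix (Fin (k + 1)) (Fin (k + 1)) R)
    (h : ∀ i, i ≠ 0 → A i 0 = 0) :
    Matrix.det A = A 0 0 * Matrix.det (A.submatrix Fin.succ Fin.succ) := by
  rw [Matrix.det_succ_column_zero, Fintype.sum_eq_single (0 : Fin (k + 1))]
  · simp
  · intro i hi
    rw [h i hi]; ring

/-- Laplace expansion along the last column when it has a single possibly-nonzero entry. -/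
private lemma det_col_last {k : ℕ} (A : Matrix (Fin (k + 1)) (Fin (k + 1)) R)
    (h : ∀ i, i ≠ Fin.last k → A i (Fin.last k) = 0) :
    Matrix.det A =
      A (Fin.last k) (Fin.last k) * Matrix.det (A.submatrix Fin.castSucc Fin.castSucc) := by
  rw [Matrix.det_succ_column A (Fin.last k), Fintype.sum_eq_single (Fin.last k)]
  · have hsgn : (-1 : R) ^ ((Fin.last k : ℕ) + (Fin.last k : ℕ)) = 1 :=
      Even.neg_one_pow ⟨k, by simp⟩
    rw [hsgn, Fin.succAbove_last, one_mul]
  · intro i hi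
    rw [h i hi]; ring

/-- Laplace expansion along the last row when it has a single possibly-nonzero entry,
in the first column. -/
private lemma det_row_last {k : ℕ} (A : Matrix (Fin (k + 1)) (Fin (k + 1)) R)
    (h : ∀ j, j ≠ 0 → A (Fin.last k) j = 0) :
    Matrix.det A =
      (-1) ^ k * A (Fin.last k) 0 * Matrix.det (A.submatrix Fin.castSucc Fin.succ) := by
  rw [Matrix.det_succ_row A (Fin.last k), Fintype.sum_eq_single (0 : Fin (k + 1))]
  · rw [Fin.succAbove_last, Fin.succAbove_zero]
    simp
  · intro j hj
    rw [h j hj]; ring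

/-- Laplace expansion along the first row when it has possibly-nonzero entries only in the
first and last columns. -/
private lemma det_row_zero_two {k : ℕ} (A : Matrix (Fin (k + 2)) (Fin (k + 2)) R)
    (h : ∀ j, j ≠ 0 → j ≠ Fin.last (k + 1) → A 0 j = 0) :
    Matrix.det A = A 0 0 * Matrix.det (A.submatrix Fin.succ Fin.succ)
      + (-1) ^ (k + 1) * A 0 (Fin.last (k + 1)) *
          Matrix.det (A.submatrix Fin.succ Fin.castSucc) := by
  rw [Matrix.det_succ_row_zero, Fin.sum_univ_succ]
  congr 1
  · simp
  · rw [Fintype.sum_eq_single (Fin.last k)]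
    · rw [Fin.succ_last, Fin.succAbove_last]
      simp
    · intro j hj
      have h1 : j.succ ≠ 0 := Fin.succ_ne_zero j
      have h2 : j.succ ≠ Fin.last (k + 1) := by
        rw [← Fin.succ_last]
        exact fun e => hj (Fin.succ_injective _ e)
      rw [h j.succ h1 h2]; ring

/-- The auxiliary matrix: identity with the first and last columns replaced by the
corresponding columns of the adjugate. -/
private def djX {n : ℕ} (M : Matrix (Fin (n + 2)) (Fin (n + 2)) R) :
    Matrix (Fin (n + 2)) (Fin (n + 2)) R :=
  Matrix.of fun i k =>
    if k = 0 then M.adjugate i 0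
    else if k = Fin.last (n + 1) then M.adjugate i (Fin.last (n + 1))
    else if i = k then (1 : R) else 0

private lemma djX_apply {n : ℕ} (M : Matrix (Fin (n + 2)) (Fin (n + 2)) R) (i k) :
    djX M i k =
      if k = 0 then M.adjugate i 0
      else if k = Fin.last (n + 1) then M.adjugate i (Fin.last (n + 1))
      else if i = k then (1 : R) else 0 := rfl

private lemma det_djX {n : ℕ} (M : Matrix (Fin (n + 2)) (Fin (n + 2)) R) :
    Matrix.det (djX M) =
      M.adjugate 0 0 * M.adjugate (Fin.last (n + 1)) (Fin.last (n + 1)) -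
      M.adjugate 0 (Fin.last (n + 1)) * M.adjugate (Fin.last (n + 1)) 0 := by
  have hlast : (Fin.last (n + 1)) ≠ 0 := (Fin.last_pos).ne'
  rw [det_row_zero_two (k := n) (djX M) ?h0]
  case h0 =>
    intro j hj0 hjl
    simp [djX_apply, hj0, hjl, Ne.symm hj0]
  have e1 : (djX M).submatrix Fin.succ Fin.succ =
      (1 : Matrix (Fin (n + 1)) (Fin (n + 1)) R).updateCol (Fin.last n)
        (fun i => M.adjugate i.succ (Fin.last (n + 1))) := by
    ext i k
    rcases eq_or_ne k (Fin.last n) with rfl | hk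
    · simp [djX_apply, Matrix.updateCol_self, Fin.succ_last, Fin.succ_ne_zero]
    · have hks : k.succ ≠ Fin.last (n + 1) := by
        rw [← Fin.succ_last]; exact fun e => hk (Fin.succ_injective _ e)
      simp [djX_apply, Matrix.updateCol_ne hk, Fin.succ_ne_zero, hks,
        Matrix.one_apply, Fin.succ_inj]
  have e2 : Matrix.det ((djX M).submatrix Fin.succ Fin.succ) =
      M.adjugate (Fin.last (n + 1)) (Fin.last (n + 1)) := by
    rw [e1, ← Matrix.cramer_apply, Matrix.cramer_one]
    simp [Fin.succ_last]
  have e3 : Matrix.det ((djX M).submatrix Fin.succ Fin.castSucc) =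
      (-1) ^ n * M.adjugate (Fin.last (n + 1)) 0 := by
    rw [det_row_last (k := n) _ ?hrow]
    case hrow =>
      intro j hj
      have hc0 : (j.castSucc : Fin (n + 2)) ≠ 0 := by
        simpa [Fin.castSucc_eq_zero_iff] using hj
      have hcl : (j.castSucc : Fin (n + 2)) ≠ Fin.last (n + 1) :=
        (Fin.castSucc_lt_last j).ne
      simp [djX_apply, hc0, hcl, Ne.symm hcl, Fin.succ_last]
    have einner : ((djX M).submatrix Fin.succ Fin.castSucc).submatrix Fin.castSucc Fin.succ =
        (1 : Matrix (Fin n) (Fin n) R) := by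
      ext i k
      have hc0 : ((k.succ : Fin (n + 1)).castSucc : Fin (n + 2)) ≠ 0 := by
        simpa [Fin.castSucc_eq_zero_iff] using Fin.succ_ne_zero k
      have hcl : ((k.succ : Fin (n + 1)).castSucc : Fin (n + 2)) ≠ Fin.last (n + 1) :=
        (Fin.castSucc_lt_last _).ne
      have hiff : (i.castSucc.succ = (k.succ).castSucc) ↔ i = k := by
        rw [Fin.succ_castSucc]
        constructor
        · intro e
          exact Fin.succ_injective _ (Fin.castSucc_injective _ e)
        · rintro rfl; rfl
      simp [djX_apply, hc0, hcl, Matrix.one_apply, hiff]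
    have hentry : ((djX M).submatrix Fin.succ Fin.castSucc) (Fin.last n) 0 =
        M.adjugate (Fin.last (n + 1)) 0 := by
      simp [djX_apply, Fin.succ_last]
    rw [einner, Matrix.det_one, hentry, mul_one]
  have h00 : (djX M) 0 0 = M.adjugate 0 0 := by simp [djX_apply]
  have h0l : (djX M) 0 (Fin.last (n + 1)) = M.adjugate 0 (Fin.last (n + 1)) := by
    simp [djX_apply, hlast]
  rw [e2, e3, h00, h0l]
  have hsgn : (-1 : R) ^ (n + 1) * (-1 : R) ^ n = -1 := by
    rw [← pow_add]
    exact Odd.neg_one_pow ⟨n, by ring⟩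
  linear_combination (M.adjugate 0 (Fin.last (n + 1)) * M.adjugate (Fin.last (n + 1)) 0) * hsgn

private lemma mul_djX_apply {n : ℕ} (M : Matrix (Fin (n + 2)) (Fin (n + 2)) R) (i k) :
    (M * djX M) i k =
      if k = 0 then M.det * (1 : Matrix (Fin (n + 2)) (Fin (n + 2)) R) i 0
      else if k = Fin.last (n + 1) then
        M.det * (1 : Matrix (Fin (n + 2)) (Fin (n + 2)) R) i (Fin.last (n + 1))
      else M i k := by
  rcases eq_or_ne k 0 with rfl | hk0
  · have h := congrFun (congrFun (Matrix.mul_adjugate M) i) 0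
    rw [Matrix.smul_apply, smul_eq_mul] at h
    rw [if_pos rfl, ← h, Matrix.mul_apply, Matrix.mul_apply]
    refine Finset.sum_congr rfl fun j _ => ?_
    rw [djX_apply, if_pos rfl]
  rcases eq_or_ne k (Fin.last (n + 1)) with rfl | hkl
  · have h := congrFun (congrFun (Matrix.mul_adjugate M) i) (Fin.last (n + 1))
    rw [Matrix.smul_apply, smul_eq_mul] at h
    rw [if_neg hk0, if_pos rfl, ← h, Matrix.mul_apply, Matrix.mul_apply]
    refine Finset.sum_congr rfl fun j _ => ?_
    rw [djX_apply, if_neg hk0, if_pos rfl]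
  · rw [if_neg hk0, if_neg hkl, Matrix.mul_apply]
    have : ∀ j, M i j * djX M j k = if j = k then M i k else 0 := by
      intro j
      rw [djX_apply, if_neg hk0, if_neg hkl]
      rcases eq_or_ne j k with rfl | hjk
      · simp
      · simp [hjk]
    simp_rw [this]
    simp

private lemma det_mul_djX {n : ℕ} (M : Matrix (Fin (n + 2)) (Fin (n + 2)) R) :
    Matrix.det (M * djX M) =
      M.det * (M.det * Matrix.det (M.submatrix (fun i : Fin n => (Fin.succ i).castSucc)
        (fun j : Fin n => (Fin.succ j).castSucc))) := by
  have hlast : (Fin.last (n + 1) : Fin (n + 2)) ≠ 0 := (Fin.last_pos).ne'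
  rw [det_col_zero (k := n + 1) _ ?hcol]
  case hcol =>
    intro i hi
    rw [mul_djX_apply, if_pos rfl, Matrix.one_apply_ne hi, mul_zero]
  have h00 : (M * djX M) 0 0 = M.det := by
    rw [mul_djX_apply, if_pos rfl, Matrix.one_apply_eq, mul_one]
  rw [h00]
  congr 1
  rw [det_col_last (k := n) _ ?hcol2]
  case hcol2 =>
    intro i hi
    have h1 : ((Fin.last n : Fin (n + 1)).succ : Fin (n + 2)) = Fin.last (n + 1) := Fin.succ_last n
    have h2 : (i.succ : Fin (n + 2)) ≠ Fin.last (n + 1) := by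
      rw [← h1]; exact fun e => hi (Fin.succ_injective _ e)
    rw [Matrix.submatrix_apply, mul_djX_apply, if_neg (Fin.succ_ne_zero (Fin.last n)),
      if_pos h1, Matrix.one_apply_ne h2, mul_zero]
  have hll : ((M * djX M).submatrix Fin.succ Fin.succ) (Fin.last n) (Fin.last n) = M.det := by
    rw [Matrix.submatrix_apply, mul_djX_apply, if_neg (Fin.succ_ne_zero _),
      if_pos (Fin.succ_last n), Fin.succ_last, Matrix.one_apply_eq, mul_one]
  rw [hll]
  have hsub : ((M * djX M).submatrix Fin.succ Fin.succ).submatrix Fin.castSucc Fin.castSucc =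
      M.submatrix (fun i : Fin n => (Fin.succ i).castSucc)
        (fun j : Fin n => (Fin.succ j).castSucc) := by
    ext i k
    show (M * djX M) (i.castSucc).succ (k.castSucc).succ = _
    rw [mul_djX_apply]
    have hc0 : ((k.castSucc : Fin (n + 1)).succ : Fin (n + 2)) ≠ 0 := Fin.succ_ne_zero _
    have hcl : ((k.castSucc : Fin (n + 1)).succ : Fin (n + 2)) ≠ Fin.last (n + 1) := by
      rw [Fin.succ_castSucc]
      exact (Fin.castSucc_lt_last _).ne
    rw [if_neg hc0, if_neg hcl, Fin.succ_castSucc, Fin.succ_castSucc]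
    rfl
  rw [hsub]

private lemma key (n : ℕ) (M : Matrix (Fin (n + 2)) (Fin (n + 2)) R) :
    M.det * (Matrix.det (M.submatrix (Fin.last (n + 1)).succAbove (Fin.last (n + 1)).succAbove) *
      Matrix.det (M.submatrix (0 : Fin (n + 2)).succAbove (0 : Fin (n + 2)).succAbove)) =
    M.det * (Matrix.det (M.submatrix (0 : Fin (n + 2)).succAbove (Fin.last (n + 1)).succAbove) *
      Matrix.det (M.submatrix (Fin.last (n + 1)).succAbove (0 : Fin (n + 2)).succAbove) +
    M.det * Matrix.det (M.submatrix (fun i : Fin n => (Fin.succ i).castSucc)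
        (fun j : Fin n => (Fin.succ j).castSucc))) := by
  have h1 : M.det * Matrix.det (djX M) = Matrix.det (M * djX M) := (Matrix.det_mul _ _).symm
  rw [det_mul_djX, det_djX] at h1
  have a00 : M.adjugate 0 0 =
      Matrix.det (M.submatrix (0 : Fin (n + 2)).succAbove (0 : Fin (n + 2)).succAbove) := by
    rw [Matrix.adjugate_fin_succ_eq_det_submatrix]
    simp
  have all : M.adjugate (Fin.last (n + 1)) (Fin.last (n + 1)) =
      Matrix.det (M.submatrix (Fin.last (n + 1)).succAbove (Fin.last (n + 1)).succAbove) := by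
    rw [Matrix.adjugate_fin_succ_eq_det_submatrix]
    have : (-1 : R) ^ ((Fin.last (n + 1) : ℕ) + (Fin.last (n + 1) : ℕ)) = 1 :=
      Even.neg_one_pow ⟨n + 1, by simp⟩
    rw [this, one_mul]
  have a0l : M.adjugate 0 (Fin.last (n + 1)) * M.adjugate (Fin.last (n + 1)) 0 =
      Matrix.det (M.submatrix (0 : Fin (n + 2)).succAbove (Fin.last (n + 1)).succAbove) *
      Matrix.det (M.submatrix (Fin.last (n + 1)).succAbove (0 : Fin (n + 2)).succAbove) := by
    rw [Matrix.adjugate_fin_succ_eq_det_submatrix, Matrix.adjugate_fin_succ_eq_det_submatrix]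
    have hs : ((-1 : R) ^ (((Fin.last (n + 1) : Fin (n + 2)) : ℕ) + ((0 : Fin (n + 2)) : ℕ))) *
        ((-1 : R) ^ (((0 : Fin (n + 2)) : ℕ) + ((Fin.last (n + 1) : Fin (n + 2)) : ℕ))) = 1 := by
      rw [← pow_add]
      refine Even.neg_one_pow ?_
      simp only [Fin.val_last, Fin.val_zero]
      exact ⟨n + 1, by ring⟩
    rw [mul_mul_mul_comm, hs, one_mul, mul_comm]
  rw [a00, all, a0l] at h1
  linear_combination h1

end DesnanotJacobiAux

/-- Desnanot–Jacobi (Dodgson condensation) identity: for an `m×m` matrix `M`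
(`m = n+2 ≥ 2`) over a commutative ring,
`M(m|m)·M(1|1) = M(1|m)·M(m|1) + det M · M(1,m|1,m)`,
where `M(i|j)` is the minor deleting row `i` and column `j`, and `M(1,m|1,m)` is
the minor deleting the first and last rows and columns. -/
theorem desnanot_jacobi {R : Type*} [CommRing R] (n : ℕ)
    (M : Matrix (Fin (n + 2)) (Fin (n + 2)) R) :
    Matrix.det (M.submatrix (Fin.last (n + 1)).succAbove (Fin.last (n + 1)).succAbove) *
      Matrix.det (M.submatrix (0 : Fin (n + 2)).succAbove (0 : Fin (n + 2)).succAbove) =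
    Matrix.det (M.submatrix (0 : Fin (n + 2)).succAbove (Fin.last (n + 1)).succAbove) *
      Matrix.det (M.submatrix (Fin.last (n + 1)).succAbove (0 : Fin (n + 2)).succAbove) +
    Matrix.det M *
      Matrix.det (M.submatrix (fun i : Fin n => (Fin.succ i).castSucc)
        (fun j : Fin n => (Fin.succ j).castSucc)) := by
  let A' := Matrix.mvPolynomialX (Fin (n + 2)) (Fin (n + 2)) ℤ
  have key' :
      Matrix.det (A'.submatrix (Fin.last (n + 1)).succAbove (Fin.last (n + 1)).succAbove) *
        Matrix.det (A'.submatrix (0 : Fin (n + 2)).succAbove (0 : Fin (n + 2)).succAbove) =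
      Matrix.det (A'.submatrix (0 : Fin (n + 2)).succAbove (Fin.last (n + 1)).succAbove) *
        Matrix.det (A'.submatrix (Fin.last (n + 1)).succAbove (0 : Fin (n + 2)).succAbove) +
      Matrix.det A' *
        Matrix.det (A'.submatrix (fun i : Fin n => (Fin.succ i).castSucc)
          (fun j : Fin n => (Fin.succ j).castSucc)) :=
    mul_left_cancel₀ (Matrix.det_mvPolynomialX_ne_zero _ ℤ) (DesnanotJacobiAux.key n A')
  have hmap : A'.map (MvPolynomial.aeval fun p : Fin (n + 2) × Fin (n + 2) => M p.1 p.2) = M := by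
    rw [← AlgHom.mapMatrix_apply]
    exact Matrix.mvPolynomialX_mapMatrix_aeval ℤ M
  have h := congrArg (MvPolynomial.aeval fun p : Fin (n + 2) × Fin (n + 2) => M p.1 p.2) key'
  simp only [_root_.map_mul, map_add, AlgHom.map_det, AlgHom.mapMatrix_apply, ← Matrix.submatrix_map,
    hmap] at h
  exact h
end

section
/- Fix Y : ℤ → ℕ → ℂ and define Wronskian-type brackets as in the context. Then for every integer m ≥ 2 one has the determinant identity [y₀, y₂, …, y_m]·[y₁, …, y_{m−1}] = [y₀, y₂, …, y_{m−1}]·[y₁, …, y_m] + [y₀, y₁, …, y_{m−1}]·[y₂, …, y_m], where [y₀, y₂, …, y_m] and [y₀, y₁, …, y_{m−1}] are m×m determinants and the remaining brackets are (m−1)×(m−1) determinants. -/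
open Matrix

/-- Determinant is linear in one column: linear combinations pull out of an updated column. -/
private lemma det_updateCol_lin {k : ℕ} (M : Matrix (Fin k) (Fin k) ℂ) (j : Fin k)
    {ι : Type} (s : Finset ι) (c : ι → ℂ) (v : ι → Fin k → ℂ) :
    (M.updateCol j (fun r => ∑ i ∈ s, c i * v i r)).det
      = ∑ i ∈ s, c i * (M.updateCol j (v i)).det := by
  classical
  induction s using Finset.induction with
  | empty =>
      simp only [Finset.sum_empty]
      exact det_eq_zero_of_column_eq_zero j (fun i => by simp)
  | @insert a s ha ih =>
      have h : (fun r => ∑ i ∈ insert a s, c i * v i r)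
          = (c a • v a) + (fun r => ∑ i ∈ s, c i * v i r) := by
        funext r; simp [Finset.sum_insert ha]
      rw [h, det_updateCol_add, det_updateCol_smul, ih, Finset.sum_insert ha]

private lemma key (Y : ℤ → ℕ → ℂ) (n : ℕ) :
    Matrix.det (Matrix.of fun (r j : Fin (n+2)) =>
        Y (if (j : ℕ) = 0 then 0 else ((j : ℕ) : ℤ) + 1) (r : ℕ)) *
      Matrix.det (Matrix.of fun (r j : Fin (n+1)) => Y (((j : ℕ) : ℤ) + 1) (r : ℕ)) =
    Matrix.det (Matrix.of fun (r j : Fin (n+1)) =>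
        Y (if (j : ℕ) = 0 then 0 else ((j : ℕ) : ℤ) + 1) (r : ℕ)) *
      Matrix.det (Matrix.of fun (r j : Fin (n+2)) => Y (((j : ℕ) : ℤ) + 1) (r : ℕ)) +
    Matrix.det (Matrix.of fun (r j : Fin (n+2)) => Y ((j : ℕ) : ℤ) (r : ℕ)) *
      Matrix.det (Matrix.of fun (r j : Fin (n+1)) => Y (((j : ℕ) : ℤ) + 2) (r : ℕ)) := by
  classical
  set A : Matrix (Fin (n+2)) (Fin (n+2)) ℂ :=
    Matrix.of (fun r j => Y (((j : ℕ) : ℤ) + 1) (r : ℕ)) with hA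
  set M0 : Matrix (Fin (n+1)) (Fin (n+1)) ℂ :=
    Matrix.of (fun r j => Y (((j : ℕ) : ℤ) + 1) (r : ℕ)) with hM0
  set P : Matrix (Fin (n+2)) (Fin (n+2)) ℂ :=
    Matrix.of (fun r j => Y ((j : ℕ) : ℤ) (r : ℕ)) with hP
  set Q : Matrix (Fin (n+1)) (Fin (n+1)) ℂ :=
    Matrix.of (fun r j => Y (((j : ℕ) : ℤ) + 2) (r : ℕ)) with hQ
  set v0 : Fin (n+2) → ℂ := fun r => Y 0 (r : ℕ) with hv0
  set w : ℤ → Fin (n+1) → ℂ := fun k r => Y k (r : ℕ) with hw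
  set c : Fin (n+2) → ℂ := cramer A v0 with hc
  -- Cramer's rule, pointwise on the first n+1 rows
  have hcr : ∀ r : Fin (n+1),
      (∑ j : Fin (n+2), c j * Y (((j : ℕ) : ℤ) + 1) (r : ℕ)) = A.det * Y 0 (r : ℕ) := by
    intro r
    have h := congrFun (mulVec_cramer A v0) ⟨(r : ℕ), by omega⟩
    simp only [mulVec, dotProduct, Pi.smul_apply, smul_eq_mul, hA, Matrix.of_apply, hv0,
      hc] at h ⊢
    rw [← h]
    exact Finset.sum_congr rfl (fun j _ => mul_comm _ _)
  -- main Cramer identity pushed through the functional v ↦ det (M0.updateColumn 0 v)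
  have E0 : A.det * (M0.updateCol 0 (w 0)).det
      = ∑ j : Fin (n+2), c j * (M0.updateCol 0 (w (((j : ℕ) : ℤ) + 1))).det := by
    rw [← det_updateCol_smul]
    have h : (A.det • w 0) = fun r => ∑ j : Fin (n+2), c j * w (((j : ℕ) : ℤ) + 1) r :=
      funext fun r => (hcr r).symm
    rw [h]
    exact det_updateCol_lin M0 0 Finset.univ c _
  -- middle terms vanish
  have hmid : ∀ j : Fin (n+2), 1 ≤ (j : ℕ) → (j : ℕ) ≤ n →
      (M0.updateCol 0 (w (((j : ℕ) : ℤ) + 1))).det = 0 := by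
    intro j h1 h2
    have hne : (0 : Fin (n+1)) ≠ ⟨(j : ℕ), by omega⟩ :=
      Fin.ne_of_val_ne (by rw [Fin.val_zero, Fin.val_mk]; omega)
    refine det_zero_of_column_eq hne ?_
    intro r
    have hne' : (⟨(j : ℕ), by omega⟩ : Fin (n+1)) ≠ 0 := hne.symm
    simp [Matrix.updateCol_apply, if_neg hne', hw, hM0]
  -- collapse the sum to the two surviving terms
  have E : A.det * (M0.updateCol 0 (w 0)).det
      = c 0 * (M0.updateCol 0 (w 1)).det
        + c (Fin.last (n+1)) * (M0.updateCol 0 (w ((n : ℤ) + 2))).det := by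
    rw [E0, Fin.sum_univ_succ, Fin.sum_univ_castSucc]
    have hz : ∀ j : Fin n, c (j.castSucc.succ)
        * (M0.updateCol 0 (w (((j.castSucc.succ : ℕ) : ℤ) + 1))).det = 0 := by
      intro j
      have hv : ((j.castSucc.succ : Fin (n+2)) : ℕ) = (j : ℕ) + 1 := by simp
      rw [hmid j.castSucc.succ (by rw [hv]; omega)
        (by rw [hv]; have := j.isLt; omega), mul_zero]
    rw [Finset.sum_congr rfl (fun j _ => hz j), Finset.sum_const_zero]
    have h1 : (((0 : Fin (n+2)) : ℕ) : ℤ) + 1 = 1 := by norm_num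
    have h2 : (Fin.last n).succ = Fin.last (n+1) := by
      ext; simp
    have h3 : (((Fin.last (n+1) : Fin (n+2)) : ℕ) : ℤ) + 1 = (n : ℤ) + 2 := by
      simp [Fin.val_last]; ring
    rw [h1, h2, h3]; ring
  -- identify the six determinants
  have hg0 : (M0.updateCol 0 (w 0)).det
      = Matrix.det (Matrix.of fun (r j : Fin (n+1)) =>
          Y (if (j : ℕ) = 0 then 0 else ((j : ℕ) : ℤ) + 1) (r : ℕ)) := by
    congr 1
    ext r j
    by_cases h : j = 0
    · simp [h, Matrix.updateCol_apply, hw]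
    · have h' : ¬ ((j : ℕ) = 0) := fun hv => h (Fin.ext hv)
      simp [h, h', Matrix.updateCol_apply, hM0]
  have hc0 : c 0 = Matrix.det (Matrix.of fun (r j : Fin (n+2)) =>
      Y (if (j : ℕ) = 0 then 0 else ((j : ℕ) : ℤ) + 1) (r : ℕ)) := by
    rw [hc, cramer_apply]
    congr 1
    ext r j
    by_cases h : j = 0
    · simp [h, Matrix.updateCol_apply, hv0]
    · have h' : ¬ ((j : ℕ) = 0) := fun hv => h (Fin.ext hv)
      simp [h, h', Matrix.updateCol_apply, hA]
  have hg1 : (M0.updateCol 0 (w 1)).det = M0.det := by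
    have h : w 1 = fun r => M0 r 0 := by
      funext r; simp [hw, hM0]
    rw [h, updateCol_eq_self]
  have hclast : c (Fin.last (n+1)) = (-1 : ℂ) ^ (n+1) * P.det := by
    rw [hc, cramer_apply]
    have h : A.updateCol (Fin.last (n+1)) v0 = P.submatrix id (finRotate (n+2)) := by
      ext r j
      by_cases h : j = Fin.last (n+1)
      · simp [h, Matrix.updateCol_apply, hv0, hP, Matrix.submatrix_apply, finRotate_last]
      · simp only [Matrix.updateCol_apply, Matrix.submatrix_apply, id_eq, hA, hP,
          Matrix.of_apply, if_neg h, coe_finRotate_of_ne_last h]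
        push_cast
        ring_nf
    rw [h, det_permute', sign_finRotate]
    push_cast
    ring
  have hQg : Q.det = (-1 : ℂ) ^ n * (M0.updateCol 0 (w ((n : ℤ) + 2))).det := by
    have h : Q = (M0.updateCol 0 (w ((n : ℤ) + 2))).submatrix id (finRotate (n+1)) := by
      ext r j
      by_cases h : j = Fin.last n
      · simp only [h, Matrix.updateCol_apply, Matrix.submatrix_apply, id_eq,
          finRotate_last, if_pos rfl, hw, hQ, Matrix.of_apply, Fin.val_last]
        push_cast
        ring_nf
      · have h2 : finRotate (n+1) j ≠ 0 := by
          intro h0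
          have := coe_finRotate_of_ne_last h
          rw [h0] at this
          simp at this
        simp only [Matrix.updateCol_apply, Matrix.submatrix_apply, id_eq, if_neg h2,
          hM0, hQ, Matrix.of_apply, coe_finRotate_of_ne_last h]
        push_cast
        ring_nf
    rw [h, det_permute', sign_finRotate]
    push_cast
    ring
  rw [← hg0, ← hc0]
  linear_combination -E - (c 0) * hg1
    - (M0.updateCol 0 (w ((n : ℤ) + 2))).det * hclast - P.det * hQg

/-- For `Y : ℤ → ℕ → ℂ` and Wronskian-type brackets
`[y_{i₁}, …, y_{i_s}] = det ((r, j) ↦ Y i_j r)`, for every `m ≥ 2`: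
`[y₀,y₂,…,y_m]·[y₁,…,y_{m−1}] = [y₀,y₂,…,y_{m−1}]·[y₁,…,y_m] + [y₀,y₁,…,y_{m−1}]·[y₂,…,y_m]`. -/
theorem bracket_recursion (Y : ℤ → ℕ → ℂ)
    (B : (s : ℕ) → (Fin s → ℤ) → ℂ)
    (hB : ∀ (s : ℕ) (idx : Fin s → ℤ),
      B s idx = Matrix.det (Matrix.of fun (r j : Fin s) => Y (idx j) (r : ℕ)))
    (m : ℕ) (hm : 2 ≤ m) :
    B m (fun j => if (j : ℕ) = 0 then 0 else ((j : ℕ) : ℤ) + 1) *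
      B (m - 1) (fun j => ((j : ℕ) : ℤ) + 1) =
    B (m - 1) (fun j => if (j : ℕ) = 0 then 0 else ((j : ℕ) : ℤ) + 1) *
      B m (fun j => ((j : ℕ) : ℤ) + 1) +
    B m (fun j => ((j : ℕ) : ℤ)) *
      B (m - 1) (fun j => ((j : ℕ) : ℤ) + 2) := by
  obtain ⟨n, rfl⟩ : ∃ n, m = n + 2 := ⟨m - 2, by omega⟩
  simp only [hB, show n + 2 - 1 = n + 1 from rfl]
  exact key Y n
end

section
/- Fix n ≥ 2 and Y : ℤ → ℕ → ℂ with Wronskian-type brackets as in the context, and assume [y₁, …, y_s] ≠ 0 for every 1 ≤ s ≤ n. Then the dressed-vacuum-form identity holds: [y₀, y₂, …, y_n] / [y₁, …, y_n] = Y 0 0 / Y 1 0 + Σ_{a=1}^{n−1} ( [y₂, …, y_{a+1}]·[y₀, y₁, …, y_a] ) / ( [y₁, …, y_a]·[y₁, …, y_{a+1}] ), where [y₂, …, y_{a+1}] and [y₁, …, y_a] are a×a determinants and [y₀, y₁, …, y_a] and [y₁, …, y_{a+1}] are (a+1)×(a+1) determinants. -/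
/-!
Write `g b = [y₀, y₂, …, y_{b+1}] / [y₁, …, y_{b+1}]`, so that the left-hand side is `g (n - 1)`
and `Y 0 0 / Y 1 0 = g 0`. The sum telescopes: after clearing denominators, `g a - g (a - 1)`
equals the `a`-th summand by a three-term Plücker relation between the brackets, in which the
`a × a` brackets are minors of the first `a` rows only. That relation is linear in the column `y₀`,
and it holds when `y₀` is replaced by any of `y₁, …, y_{a+1}`: each term then either has a
repeated column or cancels against another one, up to a cyclic permutation of columns. These
columns form a basis because `[y₁, …, y_{a+1}] ≠ 0`.
-/

open Matrix

section Plucker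

variable {R : Type*} [CommRing R]

theorem Matrix.det_of_snoc {n : ℕ} (T : Fin n → Fin (n + 1) → R) (x : Fin (n + 1) → R) :
    det (of (Fin.snoc T x)) = (-1) ^ n * det (of (Fin.cons x T)) := by
  have : of (Fin.snoc T x) = (of (Fin.cons x T)).submatrix (finRotate (n + 1)) id := by
    ext i j
    simp [Fin.snoc_eq_cons_rotate]
  rw [this, det_permute, sign_finRotate]
  simp

def Matrix.detConsLinearMap {n : ℕ} (T : Fin n → Fin (n + 1) → R) :
    (Fin (n + 1) → R) →ₗ[R] R :=
  (detRowAlternating : (Fin (n + 1) → R) [⋀^Fin (n + 1)]→ₗ[R] R).toMultilinearMap.toLinearMap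
    (Fin.cons 0 T) 0

theorem Matrix.detConsLinearMap_apply {n : ℕ} (T : Fin n → Fin (n + 1) → R) (u : Fin (n + 1) → R) :
    detConsLinearMap T u = det (of (Fin.cons u T)) := by
  simp only [detConsLinearMap, MultilinearMap.toLinearMap_apply, Fin.update_cons_zero,
    AlternatingMap.coe_multilinearMap]
  rfl

theorem LinearMap.eq_zero_of_apply_eq_zero_of_det_ne_zero [IsDomain R] {n : Type*} [Fintype n]
    [DecidableEq n] (F : (n → R) →ₗ[R] R) {v : n → n → R} (hv : det (of v) ≠ 0)
    (hF : ∀ k, F (v k) = 0) : F = 0 := by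
  refine LinearMap.ext fun u => ?_
  have hu : det (of v) • u = ∑ k, cramer (of v)ᵀ u k • of v k := by
    rw [← vecMul_eq_sum, ← mulVec_transpose, mulVec_cramer, det_transpose]
  have : det (of v) * F u = 0 := by
    rw [← smul_eq_mul, ← map_smul, hu, map_sum]
    exact Finset.sum_eq_zero fun k _ => by rw [map_smul]; exact smul_eq_zero_of_right _ (hF k)
  simpa [hv] using this

theorem Matrix.det_of_cons_self {n : ℕ} (T : Fin n → Fin (n + 1) → R) (k : Fin n) :
    det (of (Fin.cons (T k) T)) = 0 :=
  det_zero_of_row_eq (Fin.succ_ne_zero k).symm (funext fun _ => by simp)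

theorem Matrix.det_plucker [IsDomain R] {t : ℕ} (S : Fin t → Fin (t + 2) → R)
    (u a b : Fin (t + 2) → R) (h : det (of (Fin.cons a (Fin.snoc S b))) ≠ 0) :
    det (of (Fin.cons u (Fin.snoc S b))) * det (of (Fin.cons (Fin.init a) (Fin.init ∘ S))) =
      det (of (Fin.cons (Fin.init u) (Fin.init ∘ S))) * det (of (Fin.cons a (Fin.snoc S b))) +
        det (of (Fin.snoc (Fin.init ∘ S) (Fin.init b))) * det (of (Fin.cons u (Fin.cons a S))) := by
  let init : (Fin (t + 2) → R) →ₗ[R] Fin (t + 1) → R :=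
    { toFun := Fin.init, map_add' _ _ := rfl, map_smul' _ _ := rfl }
  let F := det (of (Fin.cons (Fin.init a) (Fin.init ∘ S))) • detConsLinearMap (Fin.snoc S b) -
    det (of (Fin.cons a (Fin.snoc S b))) • (detConsLinearMap (Fin.init ∘ S) ∘ₗ init) -
    det (of (Fin.snoc (Fin.init ∘ S) (Fin.init b))) • detConsLinearMap (Fin.cons a S)
  have hF_apply : ∀ w, F w =
      det (of (Fin.cons (Fin.init a) (Fin.init ∘ S))) * det (of (Fin.cons w (Fin.snoc S b))) -
      det (of (Fin.cons a (Fin.snoc S b))) * det (of (Fin.cons (Fin.init w) (Fin.init ∘ S))) -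
      det (of (Fin.snoc (Fin.init ∘ S) (Fin.init b))) * det (of (Fin.cons w (Fin.cons a S))) := by
    intro w
    simp only [F, LinearMap.sub_apply, LinearMap.smul_apply, LinearMap.comp_apply,
      detConsLinearMap_apply, smul_eq_mul]
    rfl
  have hF : F = 0 := by
    refine LinearMap.eq_zero_of_apply_eq_zero_of_det_ne_zero F h fun k => ?_
    rw [hF_apply]
    induction k using Fin.cases with
    | zero =>
      have := det_of_cons_self (Fin.cons a S) 0
      simp only [Fin.cons_zero] at this ⊢
      rw [this]
      ring
    | succ i =>
      induction i using Fin.lastCases with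
      | last =>
        have h_rep := det_of_cons_self (Fin.snoc S b) (Fin.last t)
        have h_top := det_of_snoc (Fin.init ∘ S) (Fin.init b)
        have h_full := det_of_snoc (Fin.cons a S) b
        rw [← Fin.cons_snoc_eq_snoc_cons] at h_full
        simp only [Fin.cons_succ, Fin.snoc_last] at h_rep ⊢
        rw [h_rep, h_top, h_full]
        ring
      | cast j =>
        have h₁ := det_of_cons_self (Fin.snoc S b) j.castSucc
        have h₂ := det_of_cons_self (Fin.init ∘ S) j
        have h₃ := det_of_cons_self (Fin.cons a S) j.succ
        simp only [Fin.cons_succ, Fin.snoc_castSucc, Function.comp_apply] at h₁ h₂ h₃ ⊢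
        rw [h₁, h₂, h₃]
        ring
  have hFu := hF_apply u
  rw [hF, LinearMap.zero_apply] at hFu
  linear_combination -hFu

end Plucker

/-- `bracket Y idx` is the paper's `[y_{idx 0}, …, y_{idx (s-1)}]`. -/
def bracket {ι K : Type*} [CommRing K] (Y : ι → ℕ → K) {s : ℕ} (idx : Fin s → ι) : K :=
  det (of fun r j : Fin s => Y (idx j) r)

theorem bracket_eq_det_of {ι K : Type*} [CommRing K] (Y : ι → ℕ → K) {s : ℕ} (idx : Fin s → ι) :
    bracket Y idx = det (of fun j (r : Fin s) => Y (idx j) r) :=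
  (det_transpose _).symm

theorem bracket_plucker {ι K : Type*} [CommRing K] [IsDomain K] (Y : ι → ℕ → K) {t : ℕ}
    (S : Fin t → ι) (u a b : ι) (h : bracket Y (Fin.cons a (Fin.snoc S b)) ≠ 0) :
    bracket Y (Fin.cons u (Fin.snoc S b)) * bracket Y (Fin.cons a S) =
      bracket Y (Fin.cons u S) * bracket Y (Fin.cons a (Fin.snoc S b)) +
        bracket Y (Fin.snoc S b) * bracket Y (Fin.cons u (Fin.cons a S)) := by
  let y : ι → Fin (t + 2) → K := fun i r => Y i r
  simp only [bracket_eq_det_of] at h ⊢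
  convert det_plucker (y ∘ S) (y u) (y a) (y b) ?_ using 3
  all_goals simp only [← Fin.comp_cons, ← Fin.comp_snoc]
  all_goals first | rfl | exact h

theorem bracket_succ_plucker {K : Type*} [CommRing K] [IsDomain K] (Y : ℤ → ℕ → K) (t : ℕ)
    (h : bracket Y (fun j : Fin (t + 2) => (j : ℤ) + 1) ≠ 0) :
    bracket Y (fun j : Fin (t + 2) => if (j : ℕ) = 0 then 0 else (j : ℤ) + 1) *
        bracket Y (fun j : Fin (t + 1) => (j : ℤ) + 1) =
      bracket Y (fun j : Fin (t + 1) => if (j : ℕ) = 0 then 0 else (j : ℤ) + 1) *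
          bracket Y (fun j : Fin (t + 2) => (j : ℤ) + 1) +
        bracket Y (fun j : Fin (t + 1) => (j : ℤ) + 2) *
          bracket Y (fun j : Fin (t + 2) => (j : ℤ)) := by
  let S : Fin t → ℤ := fun i => (i : ℤ) + 2
  have h_snoc : Fin.snoc S ((t : ℤ) + 2) = fun j : Fin (t + 1) => (j : ℤ) + 2 := by
    funext j
    cases j using Fin.lastCases <;> simp [S]
  have h_one_cons : Fin.cons 1 S = fun j : Fin (t + 1) => (j : ℤ) + 1 := by
    funext j
    cases j using Fin.cases <;> simp [S]; ring
  have h_one_snoc : Fin.cons 1 (Fin.snoc S ((t : ℤ) + 2)) = fun j : Fin (t + 2) => (j : ℤ) + 1 := by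
    funext j
    cases j using Fin.cases <;> simp [h_snoc]; ring
  have h_zero_one : Fin.cons 0 (Fin.cons 1 S) = fun j : Fin (t + 2) => (j : ℤ) := by
    funext j
    cases j using Fin.cases <;> simp [h_one_cons]
  have h_zero_snoc : Fin.cons 0 (Fin.snoc S ((t : ℤ) + 2)) =
      fun j : Fin (t + 2) => if (j : ℕ) = 0 then 0 else (j : ℤ) + 1 := by
    funext j
    cases j using Fin.cases <;> simp [h_snoc]; ring
  have h_zero_cons : Fin.cons 0 S = fun j : Fin (t + 1) => if (j : ℕ) = 0 then 0 else (j : ℤ) + 1 := by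
    funext j
    cases j using Fin.cases <;> simp [S]; ring
  have := bracket_plucker Y S 0 1 (t + 2) (by rwa [h_one_snoc])
  rwa [h_zero_snoc, h_one_snoc, h_zero_one, h_one_cons, h_zero_cons, h_snoc] at this

/-- `vacuumRatio Y b = [y₀, y₂, …, y_{b+1}] / [y₁, …, y_{b+1}]`. -/
def vacuumRatio {K : Type*} [Field K] (Y : ℤ → ℕ → K) (b : ℕ) : K :=
  bracket Y (fun j : Fin (b + 1) => if (j : ℕ) = 0 then 0 else (j : ℤ) + 1) /
    bracket Y (fun j : Fin (b + 1) => (j : ℤ) + 1)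

theorem vacuumRatio_zero {K : Type*} [Field K] (Y : ℤ → ℕ → K) :
    vacuumRatio Y 0 = Y 0 0 / Y 1 0 := by
  simp [vacuumRatio, bracket]

theorem vacuumRatio_succ_sub {K : Type*} [Field K] (Y : ℤ → ℕ → K) (t : ℕ)
    (h₁ : bracket Y (fun j : Fin (t + 1) => (j : ℤ) + 1) ≠ 0)
    (h₂ : bracket Y (fun j : Fin (t + 2) => (j : ℤ) + 1) ≠ 0) :
    vacuumRatio Y (t + 1) - vacuumRatio Y t =
      bracket Y (fun j : Fin (t + 1) => (j : ℤ) + 2) * bracket Y (fun j : Fin (t + 2) => (j : ℤ)) /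
        (bracket Y (fun j : Fin (t + 1) => (j : ℤ) + 1) *
          bracket Y (fun j : Fin (t + 2) => (j : ℤ) + 1)) := by
  unfold vacuumRatio
  rw [div_sub_div _ _ h₂ h₁, div_eq_div_iff (mul_ne_zero h₂ h₁) (mul_ne_zero h₁ h₂)]
  linear_combination (bracket Y (fun j : Fin (t + 1) => (j : ℤ) + 1) *
    bracket Y (fun j : Fin (t + 2) => (j : ℤ) + 1)) * bracket_succ_plucker Y t h₂

/-- Dressed vacuum form: for `n ≥ 2`, `Y : ℤ → ℕ → ℂ` with Wronskian-type brackets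
`[y_{i₁}, …, y_{i_s}] = det ((r, j) ↦ Y i_j r)`, assuming `[y₁,…,y_s] ≠ 0` for
`1 ≤ s ≤ n`, one has
`[y₀,y₂,…,y_n]/[y₁,…,y_n] = Y 0 0 / Y 1 0
   + Σ_{a=1}^{n−1} ([y₂,…,y_{a+1}]·[y₀,y₁,…,y_a])/([y₁,…,y_a]·[y₁,…,y_{a+1}])`. -/
theorem dressed_vacuum_form (n : ℕ) (hn : 2 ≤ n) (Y : ℤ → ℕ → ℂ)
    (B : (s : ℕ) → (Fin s → ℤ) → ℂ)
    (hB : ∀ (s : ℕ) (idx : Fin s → ℤ),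
      B s idx = Matrix.det (Matrix.of fun (r j : Fin s) => Y (idx j) (r : ℕ)))
    (hne : ∀ s : ℕ, 1 ≤ s → s ≤ n → B s (fun j => ((j : ℕ) : ℤ) + 1) ≠ 0) :
    B n (fun j => if (j : ℕ) = 0 then 0 else ((j : ℕ) : ℤ) + 1) /
      B n (fun j => ((j : ℕ) : ℤ) + 1) =
    Y 0 0 / Y 1 0 +
      ∑ a ∈ Finset.Icc 1 (n - 1),
        (B a (fun j => ((j : ℕ) : ℤ) + 2) * B (a + 1) (fun j => ((j : ℕ) : ℤ))) /
        (B a (fun j => ((j : ℕ) : ℤ) + 1) * B (a + 1) (fun j => ((j : ℕ) : ℤ) + 1)) := by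
  obtain ⟨m, rfl⟩ : ∃ m, n = m + 1 := ⟨n - 1, by omega⟩
  obtain rfl : B = fun _ idx => bracket Y idx := funext fun s => funext (hB s)
  have hsum : ∑ a ∈ Finset.Icc 1 m,
      bracket Y (fun j : Fin a => (j : ℤ) + 2) * bracket Y (fun j : Fin (a + 1) => (j : ℤ)) /
        (bracket Y (fun j : Fin a => (j : ℤ) + 1) * bracket Y (fun j : Fin (a + 1) => (j : ℤ) + 1)) =
      ∑ a ∈ Finset.Icc 1 m, (vacuumRatio Y (a + 1 - 1) - vacuumRatio Y (a - 1)) := by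
    refine Finset.sum_congr rfl fun a ha => ?_
    rw [Finset.mem_Icc] at ha
    obtain ⟨t, rfl⟩ : ∃ t, a = t + 1 := ⟨a - 1, by omega⟩
    exact (vacuumRatio_succ_sub Y t (hne _ (by omega) (by omega)) (hne _ (by omega) (by omega))).symm
  change vacuumRatio Y m = _
  rw [Nat.add_sub_cancel, hsum, Finset.sum_Icc_sub (by omega) (fun a => vacuumRatio Y (a - 1)),
    ← vacuumRatio_zero, Nat.add_sub_cancel, Nat.sub_self]
  ring
end

section
/- Let y : ℤ → (Fin 2 → ℂ) satisfy the unit Wronskian condition [y_k, y_{k+1}] = 1 for every k ∈ ℤ, and set τ_j(k) := [y_k, y_{k+j+1}]. Then for every j ≥ 0 and every k ∈ ℤ the recursion relation τ_j(k+1)·τ₁(k) = τ_{j+1}(k) + τ_{j−1}(k+2) holds, where τ_{−1}(k) := [y_k, y_k] = 0. -/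
/-- Plücker-type identity for 2-vectors. -/
lemma stokes_key (a b c d : Fin 2 → ℂ)
    (h1 : a 0 * b 1 - a 1 * b 0 = 1) (h2 : b 0 * c 1 - b 1 * c 0 = 1) :
    (b 0 * d 1 - b 1 * d 0) * (a 0 * c 1 - a 1 * c 0) =
      (a 0 * d 1 - a 1 * d 0) + (c 0 * d 1 - c 1 * d 0) := by
  linear_combination (c 0 * d 1 - c 1 * d 0) * h1 + (a 0 * d 1 - a 1 * d 0) * h2

/-- Recursion relation for the Stokes multipliers `τ_j(k) = [y_k, y_{k+j+1}]` of a
second order ODE with unit Wronskians `[y_k, y_{k+1}] = 1`: for `j ≥ 0`,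
`τ_j(k+1)·τ₁(k) = τ_{j+1}(k) + τ_{j−1}(k+2)`. -/
theorem stokes_recursion (y : ℤ → (Fin 2 → ℂ))
    (W : ℤ → ℤ → ℂ)
    (hW : ∀ i j : ℤ, W i j = Matrix.det !![y i 0, y j 0; y i 1, y j 1])
    (hWron : ∀ k : ℤ, W k (k + 1) = 1)
    (τ : ℤ → ℤ → ℂ)
    (hτ : ∀ j k : ℤ, τ j k = W k (k + j + 1)) :
    ∀ j : ℤ, 0 ≤ j → ∀ k : ℤ,
      τ j (k + 1) * τ 1 k = τ (j + 1) k + τ (j - 1) (k + 2) := by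
  intro j _ k
  have h1 : y k 0 * y (k + 1) 1 - y k 1 * y (k + 1) 0 = 1 := by
    have := hWron k; rw [hW, Matrix.det_fin_two_of] at this; linear_combination this
  have h2 : y (k + 1) 0 * y (k + 2) 1 - y (k + 1) 1 * y (k + 2) 0 = 1 := by
    have := hWron (k + 1)
    rw [hW, Matrix.det_fin_two_of, show k + 1 + 1 = k + 2 by ring] at this
    linear_combination this
  rw [hτ, hτ, hτ, hτ, hW, hW, hW, hW,
    show k + 1 + j + 1 = k + j + 2 by ring,
    show k + (j + 1) + 1 = k + j + 2 by ring,
    show k + 2 + (j - 1) + 1 = k + j + 2 by ring,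
    show k + 1 + 1 = k + 2 by ring]
  simp only [Matrix.det_fin_two_of]
  linear_combination stokes_key (y k) (y (k + 1)) (y (k + 2)) (y (k + j + 2)) h1 h2
end

section
/- Let y : ℤ → (Fin 2 → ℂ) satisfy the unit Wronskian condition [y_k, y_{k+1}] = 1 for every k ∈ ℤ, and set τ_j(k) := [y_k, y_{k+j+1}]. Then for every j ≥ 0 and every k ∈ ℤ the fusion (T-system) relation τ_j(k)·τ_j(k+1) = 1 + τ_{j+1}(k)·τ_{j−1}(k+1) holds, where τ_{−1}(k) := [y_k, y_k] = 0. -/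
/-- Fusion (T-system) relation for the Stokes multipliers `τ_j(k) = [y_k, y_{k+j+1}]`
of a second order ODE with unit Wronskians `[y_k, y_{k+1}] = 1`: for `j ≥ 0`,
`τ_j(k)·τ_j(k+1) = 1 + τ_{j+1}(k)·τ_{j−1}(k+1)`. -/
theorem stokes_fusion (y : ℤ → (Fin 2 → ℂ))
    (W : ℤ → ℤ → ℂ)
    (hW : ∀ i j : ℤ, W i j = Matrix.det !![y i 0, y j 0; y i 1, y j 1])
    (hWron : ∀ k : ℤ, W k (k + 1) = 1)
    (τ : ℤ → ℤ → ℂ)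
    (hτ : ∀ j k : ℤ, τ j k = W k (k + j + 1)) :
    ∀ j : ℤ, 0 ≤ j → ∀ k : ℤ,
      τ j k * τ j (k + 1) = 1 + τ (j + 1) k * τ (j - 1) (k + 1) := by
  intro j _ k
  have h0 := hWron k
  have h1 := hWron (k + j + 1)
  rw [show k + j + 1 + 1 = k + j + 2 by ring] at h1
  rw [hτ, hτ, hτ, hτ,
    show k + 1 + j + 1 = k + j + 2 by ring,
    show k + (j + 1) + 1 = k + j + 2 by ring,
    show k + 1 + (j - 1) + 1 = k + j + 1 by ring]
  rw [hW, hW, hW, hW] at *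
  simp only [Matrix.det_fin_two_of] at *
  linear_combination (y (k+j+1) 0 * y (k+j+2) 1 - y (k+j+2) 0 * y (k+j+1) 1) * h0 + h1
end

section
/- Let T : ℤ → ℤ → ℂ satisfy the T-system relation T_j(k−1)·T_j(k+1) = 1 + T_{j+1}(k)·T_{j−1}(k) for all j, k ∈ ℤ. Define Y_j(k) := T_{j+1}(k)·T_{j−1}(k). Then the Y-system relation Y_j(k−1)·Y_j(k+1) = (1 + Y_{j−1}(k))·(1 + Y_{j+1}(k)) holds for all j, k ∈ ℤ. -/
/-- From the T-system `T_j(k−1)·T_j(k+1) = 1 + T_{j+1}(k)·T_{j−1}(k)` the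
Y-functions `Y_j(k) = T_{j+1}(k)·T_{j−1}(k)` satisfy the Y-system
`Y_j(k−1)·Y_j(k+1) = (1 + Y_{j−1}(k))·(1 + Y_{j+1}(k))`. -/
theorem T_system_to_Y_system (T : ℤ → ℤ → ℂ)
    (hT : ∀ j k : ℤ, T j (k - 1) * T j (k + 1) = 1 + T (j + 1) k * T (j - 1) k)
    (Y : ℤ → ℤ → ℂ)
    (hY : ∀ j k : ℤ, Y j k = T (j + 1) k * T (j - 1) k) :
    ∀ j k : ℤ,
      Y j (k - 1) * Y j (k + 1) = (1 + Y (j - 1) k) * (1 + Y (j + 1) k) := by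
  intro j k
  have h1 := hT (j + 1) k
  have h2 := hT (j - 1) k
  rw [hY, hY, hY, hY]
  linear_combination T (j - 1) (k - 1) * T (j - 1) (k + 1) * h1 +
    (1 + T (j + 1 + 1) k * T (j + 1 - 1) k) * h2
end
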